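/- Among all trees T of order n ≥ 8, Λ(T) = Σ_v (ecc(v) − norm(v)) satisfies Λ(T) ≥ 12, with equality if and only if T is the tree Ŝ_n obtained from a path on 5 vertices by attaching n−5 pendant vertices to its middle vertex. -/
import Mathlib


open Finset

variable {V : Type*}

/-- Eccentricity: the maximum distance from `v` to any vertex. -/
noncomputable def ecc (G : SimpleGraph V) [Fintype V] (v : V) : ℕ :=
  Finset.univ.sup fun u => G.dist v u

/-- Diameter: the maximum eccentricity. -/
noncomputable def gdiam (G : SimpleGraph V) [Fintype V] : ℕ :=
  Finset.univ.sup fun v => ecc G v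

/-- A vertex is peripheral if its eccentricity equals the diameter. -/
noncomputable def peripheral (G : SimpleGraph V) [Fintype V] (v : V) : Prop :=
  ecc G v = gdiam G

/-- Normality: the minimum distance from `v` to a peripheral vertex. -/
noncomputable def gnorm (G : SimpleGraph V) [Fintype V] (v : V) : ℕ :=
  sInf {n | ∃ u, peripheral G u ∧ G.dist v u = n}

/-- The sum of normalities. -/
noncomputable def NormSum (G : SimpleGraph V) [Fintype V] : ℕ :=
  ∑ v, gnorm G v

/-- λ(v) = ecc(v) − norm(v). -/
noncomputable def lam (G : SimpleGraph V) [Fintype V] (v : V) : ℕ :=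
  ecc G v - gnorm G v

/-- Λ(T) = Σ_v λ(v). -/
noncomputable def LamSum (G : SimpleGraph V) [Fintype V] : ℕ :=
  ∑ v, lam G v

/-- `G` is the tree Ŝ_n: a path x–a–c–b–y on 5 vertices, with every other
vertex a pendant neighbor of the middle vertex `c`. -/
def IsHatS (G : SimpleGraph V) : Prop :=
  ∃ x a c b y : V, [x, a, c, b, y].Pairwise (· ≠ ·) ∧
    G.Adj x a ∧ G.Adj a c ∧ G.Adj c b ∧ G.Adj b y ∧
    ∀ v : V, v ∉ ({x, a, c, b, y} : Set V) → ∀ u : V, G.Adj v u ↔ u = c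



open SimpleGraph Walk

section Aux
variable {G : SimpleGraph V} [Fintype V]

lemma dist_le_ecc (v u : V) : G.dist v u ≤ ecc G v := Finset.le_sup (Finset.mem_univ u)

lemma ecc_le {v : V} {k : ℕ} (h : ∀ u, G.dist v u ≤ k) : ecc G v ≤ k :=
  Finset.sup_le fun u _ => h u

lemma exists_ecc [Nonempty V] (v : V) : ∃ u, G.dist v u = ecc G v := by
  obtain ⟨u, -, hu⟩ := Finset.exists_mem_eq_sup Finset.univ Finset.univ_nonempty
    (fun u => G.dist v u)
  exact ⟨u, hu.symm⟩

lemma ecc_le_gdiam (v : V) : ecc G v ≤ gdiam G := Finset.le_sup (Finset.mem_univ v)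

lemma exists_gdiam [Nonempty V] : ∃ v, ecc (G := G) v = gdiam G := by
  obtain ⟨v, -, hv⟩ := Finset.exists_mem_eq_sup Finset.univ Finset.univ_nonempty
    (fun v => ecc G v)
  exact ⟨v, hv.symm⟩

lemma gnorm_le {v u : V} (hu : peripheral G u) : gnorm G v ≤ G.dist v u :=
  Nat.sInf_le ⟨u, hu, rfl⟩

lemma exists_gnorm {v u : V} (hu : peripheral G u) :
    ∃ w, peripheral G w ∧ G.dist v w = gnorm G v :=
  Nat.sInf_mem (s := {n | ∃ w, peripheral G w ∧ G.dist v w = n}) ⟨_, u, hu, rfl⟩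

lemma gnorm_le_ecc {u : V} (hu : peripheral G u) (v : V) : gnorm G v ≤ ecc G v :=
  le_trans (gnorm_le hu) (dist_le_ecc v u)

lemma peripheral_gnorm_eq_zero {v : V} (hv : peripheral G v) : gnorm G v = 0 :=
  by have := gnorm_le (v := v) hv; simp [SimpleGraph.dist_self] at this; omega

section TreeLemmas
variable (hT : G.IsTree)
include hT

omit [Fintype V] in
/-- In a tree the length of any path equals the distance. -/
lemma tpl {u v : V} {p : G.Walk u v} (hp : p.IsPath) : p.length = G.dist u v := by
  obtain ⟨q, hq, hql⟩ := hT.isConnected.exists_path_of_dist u v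
  have := hT.IsAcyclic.path_unique ⟨p, hp⟩ ⟨q, hq⟩
  rw [← hql]
  exact congrArg Walk.length (congrArg Subtype.val this)

omit [Fintype V] in
/-- splitting distances at a vertex of a path -/
lemma dist_split [DecidableEq V] {x y z : V} {p : G.Walk x y} (hp : p.IsPath)
    (hz : z ∈ p.support) :
    G.dist x z + G.dist z y = G.dist x y := by
  rw [← tpl hT hp, ← tpl hT (hp.takeUntil hz), ← tpl hT (hp.dropUntil hz)]
  have := congrArg Walk.length (p.take_spec hz)
  rw [Walk.length_append] at this
  omega

omit [Fintype V] in
/-- converse: if distances add up, the vertex is on the path -/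
lemma mem_of_dist_add {x y z : V} {p : G.Walk x y} (hp : p.IsPath)
    (h : G.dist x z + G.dist z y = G.dist x y) : z ∈ p.support := by
  obtain ⟨q1, hq1, hl1⟩ := hT.isConnected.exists_path_of_dist x z
  obtain ⟨q2, hq2, hl2⟩ := hT.isConnected.exists_path_of_dist z y
  have hw : (q1.append q2).length = G.dist x y := by
    rw [Walk.length_append]; omega
  have hwp : (q1.append q2).IsPath := (q1.append q2).isPath_of_length_eq_dist hw
  have heq := congrArg Subtype.val (hT.IsAcyclic.path_unique ⟨q1.append q2, hwp⟩ ⟨p, hp⟩)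
  have hme : z ∈ (q1.append q2).support := by
    rw [Walk.mem_support_append_iff]; left; exact Walk.end_mem_support q1
  simp only at heq
  rwa [heq] at hme

omit [Fintype V] in
/-- adjacent vertices have distances differing by exactly one -/
lemma adj_dist_ne [DecidableEq V] {v u w : V} (h : G.Adj u w) :
    G.dist v u ≠ G.dist v w := by
  intro he
  obtain ⟨p, hp, hpl⟩ := hT.isConnected.exists_path_of_dist v u
  by_cases hw : w ∈ p.support
  · have hsp := dist_split hT hp hw
    have h1 : G.dist w u = 1 := by rw [SimpleGraph.dist_eq_one_iff_adj]; exact h.symm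
    omega
  · have hq : (Walk.cons h.symm p.reverse).IsPath := by
      rw [Walk.cons_isPath_iff]
      refine ⟨hp.reverse, ?_⟩
      rwa [Walk.support_reverse, List.mem_reverse]
    have hq2 : (Walk.cons h.symm p.reverse).reverse.IsPath := hq.reverse
    have := tpl hT hq2
    rw [Walk.length_reverse, Walk.length_cons, Walk.length_reverse, hpl] at this
    omega

omit [Fintype V] in
lemma adj_dist [DecidableEq V] (v : V) {u w : V} (h : G.Adj u w) :
    G.dist v w = G.dist v u + 1 ∨ G.dist v u = G.dist v w + 1 := by
  have h1 : G.dist u w = 1 := by rwa [SimpleGraph.dist_eq_one_iff_adj]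
  have t1 := hT.isConnected.dist_triangle (u := v) (v := u) (w := w)
  have t2 := hT.isConnected.dist_triangle (u := v) (v := w) (w := u)
  have hne := adj_dist_ne hT (v := v) h
  have h2 : G.dist w u = 1 := by rw [SimpleGraph.dist_comm]; exact h1
  omega

omit [Fintype V] in
/-- parity along a walk -/
lemma walk_parity [DecidableEq V] (v : V) {x y : V} (w : G.Walk x y) :
    (G.dist v x + w.length) % 2 = G.dist v y % 2 := by
  induction w with
  | nil => simp
  | cons h p ih =>
    have := adj_dist hT v h
    rw [Walk.length_cons]
    omega

omit [Fintype V] in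
lemma dist_parity [DecidableEq V] (v x y : V) :
    (G.dist v x + G.dist x y) % 2 = G.dist v y % 2 := by
  obtain ⟨p, hp, hpl⟩ := hT.isConnected.exists_path_of_dist x y
  rw [← hpl]
  exact walk_parity hT v p

end TreeLemmas

omit [Fintype V] in
lemma step (hT : G.IsTree) {x y : V} (h : 1 ≤ G.dist x y) :
    ∃ p1, G.Adj x p1 ∧ G.dist p1 y + 1 = G.dist x y := by
  obtain ⟨P, hP, hPl⟩ := hT.isConnected.exists_path_of_dist x y
  cases P with
  | nil => rw [Walk.length_nil] at hPl; omega
  | cons hadj P1 =>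
    refine ⟨_, hadj, ?_⟩
    have := tpl hT hP.of_cons
    rw [Walk.length_cons, this] at hPl
    omega

lemma lam_eq (v : V) : lam G v = ecc G v - gnorm G v := rfl

lemma lam_peripheral {v : V} (hv : peripheral G v) : lam G v = gdiam G := by
  rw [lam_eq, peripheral_gnorm_eq_zero hv, hv, Nat.sub_zero]

lemma L1 (hT : G.IsTree) {x y : V} (hpx : peripheral G x) (hpy : peripheral G y)
    (hd : G.dist x y = gdiam G) (h4 : 4 ≤ gdiam G) :
    4 * gdiam G - 4 ≤ LamSum G := by
  classical
  set d := gdiam G with hdd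
  obtain ⟨p1, hap1, hdp1⟩ := step hT (x := x) (y := y) (by omega)
  obtain ⟨q1, haq1, hdq1⟩ := step hT (x := y) (y := x)
    (by rw [SimpleGraph.dist_comm]; omega)
  have dxp1 : G.dist x p1 = 1 := SimpleGraph.dist_eq_one_iff_adj.mpr hap1
  have dyq1 : G.dist y q1 = 1 := SimpleGraph.dist_eq_one_iff_adj.mpr haq1
  have dp1y : G.dist p1 y = d - 1 := by omega
  have dyx : G.dist y x = d := by rw [SimpleGraph.dist_comm]; exact hd
  have dq1x : G.dist q1 x = d - 1 := by omega
  have dxx : G.dist x x = 0 := SimpleGraph.dist_self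
  have dyy : G.dist y y = 0 := SimpleGraph.dist_self
  -- distinctness
  have hxy : x ≠ y := by intro h; rw [h, dyy] at hd; omega
  have hxp1 : x ≠ p1 := hap1.ne
  have hyq1 : y ≠ q1 := haq1.ne
  have hxq1 : x ≠ q1 := by
    intro h; rw [← h, SimpleGraph.dist_comm, dxx] at dq1x; omega
  have hyp1 : y ≠ p1 := by
    intro h; rw [← h, SimpleGraph.dist_comm, dyy] at dp1y; omega
  have hp1q1 : p1 ≠ q1 := by
    intro h
    rw [h, SimpleGraph.dist_comm] at dp1y
    omega
  -- lambda bounds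
  have lx : lam G x = d := lam_peripheral hpx
  have ly : lam G y = d := lam_peripheral hpy
  have lp1 : d - 2 ≤ lam G p1 := by
    have h1 : d - 1 ≤ ecc G p1 := dp1y ▸ dist_le_ecc p1 y
    have h2 : gnorm G p1 ≤ 1 := by
      have := gnorm_le (v := p1) hpx
      rw [SimpleGraph.dist_comm, dxp1] at this
      exact this
    rw [lam_eq]; omega
  have lq1 : d - 2 ≤ lam G q1 := by
    have h1 : d - 1 ≤ ecc G q1 := dq1x ▸ dist_le_ecc q1 x
    have h2 : gnorm G q1 ≤ 1 := by
      have := gnorm_le (v := q1) hpy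
      rw [SimpleGraph.dist_comm, dyq1] at this
      exact this
    rw [lam_eq]; omega
  -- summation
  have hsub : ({x, p1, q1, y} : Finset V) ⊆ Finset.univ := Finset.subset_univ _
  have hsum : ∑ v ∈ ({x, p1, q1, y} : Finset V), lam G v ≤ LamSum G :=
    Finset.sum_le_sum_of_subset hsub
  rw [Finset.sum_insert (by simp [hxp1, hxq1, hxy]),
    Finset.sum_insert (by simp [hp1q1, hyp1.symm]),
    Finset.sum_insert (by simp [hyq1.symm]), Finset.sum_singleton] at hsum
  omega

lemma L23 (hT : G.IsTree) (hn : 8 ≤ Fintype.card V) (h2 : 2 ≤ gdiam G)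
    (h3 : gdiam G ≤ 3) : 14 ≤ LamSum G := by
  classical
  have hne : Nonempty V := by
    rw [← Fintype.card_pos_iff]; omega
  set d := gdiam G with hdd
  obtain ⟨x, hx⟩ := exists_gdiam (G := G)
  obtain ⟨y, hy⟩ := exists_ecc (G := G) x
  have hpx : peripheral G x := hx
  have hdxy : G.dist x y = d := by rw [hy, hx]
  have hpy : peripheral G y := by
    refine le_antisymm (ecc_le_gdiam y) ?_
    have := dist_le_ecc (G := G) y x
    rw [SimpleGraph.dist_comm (u := y) (v := x), hdxy] at this
    exact this
  obtain ⟨P, hP, hPl⟩ := hT.isConnected.exists_path_of_dist x y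
  -- every vertex off the path is peripheral
  have key : ∀ v, v ∉ P.support → peripheral G v := by
    intro v hv
    have t := hT.isConnected.dist_triangle (u := x) (v := v) (w := y)
    have hsum : G.dist x v + G.dist v y ≠ d := by
      intro h
      exact hv (mem_of_dist_add hT hP (by rw [hdxy]; exact h))
    have hpar := dist_parity hT v x y
    rw [SimpleGraph.dist_comm (u := v) (v := x)] at hpar
    have h23 : d = 2 ∨ d = 3 := by omega
    have hmax : d ≤ G.dist x v ∨ d ≤ G.dist v y := by
      rcases h23 with h | h <;> rw [h] at hdxy ⊢ <;> rw [hdxy] at hpar <;> omega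
    have hecc : d ≤ ecc G v := by
      rcases hmax with h | h
      · have := dist_le_ecc (G := G) v x
        rw [SimpleGraph.dist_comm (u := v) (v := x)] at this
        omega
      · have := dist_le_ecc (G := G) v y
        omega
    exact le_antisymm (ecc_le_gdiam v) hecc
  -- the counting set
  set F := P.support.toFinset with hF
  set A := insert x (insert y (Finset.univ \ F)) with hA
  have hxF : x ∈ F := by rw [hF, List.mem_toFinset]; exact P.start_mem_support
  have hyF : y ∈ F := by rw [hF, List.mem_toFinset]; exact P.end_mem_support
  have hxy : x ≠ y := by
    intro h
    rw [h, SimpleGraph.dist_self] at hdxy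
    omega
  have hlamA : ∀ v ∈ A, lam G v = d := by
    intro v hv
    rw [hA, Finset.mem_insert, Finset.mem_insert, Finset.mem_sdiff] at hv
    rcases hv with rfl | rfl | ⟨-, hv⟩
    · exact lam_peripheral hpx
    · exact lam_peripheral hpy
    · exact lam_peripheral (key v (by rwa [← List.mem_toFinset]))
  have hcardF : F.card ≤ d + 1 := by
    calc F.card ≤ P.support.length := P.support.toFinset_card_le
    _ = P.length + 1 := Walk.length_support P
    _ = d + 1 := by rw [hPl, hdxy]
  have hcardA : 9 - d ≤ A.card := by
    have h1 : x ∉ insert y (Finset.univ \ F) := by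
      simp [hxy, hxF]
    have h2 : y ∉ Finset.univ \ F := by simp [hyF]
    rw [hA, Finset.card_insert_of_notMem h1, Finset.card_insert_of_notMem h2,
      Finset.card_sdiff_of_subset (Finset.subset_univ F)]
    have := Finset.card_univ (α := V)
    omega
  have hsumA : ∑ v ∈ A, lam G v = A.card * d := by
    rw [Finset.sum_congr rfl hlamA, Finset.sum_const, smul_eq_mul]
  have hle : ∑ v ∈ A, lam G v ≤ LamSum G :=
    Finset.sum_le_sum_of_subset (Finset.subset_univ A)
  rw [hsumA] at hle
  have h23 : d = 2 ∨ d = 3 := by omega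
  rcases h23 with h | h <;> rw [h] at hle hcardA <;> omega

lemma diam_ge_two (hT : G.IsTree) (hn : 3 ≤ Fintype.card V) : 2 ≤ gdiam G := by
  classical
  by_contra h
  push_neg at h
  have hadj : ∀ a b : V, a ≠ b → G.Adj a b := by
    intro a b hab
    have h1 : G.dist a b ≤ 1 :=
      le_trans (dist_le_ecc a b) (by have := ecc_le_gdiam (G := G) a; omega)
    have h0 : G.dist a b ≠ 0 := fun hh => hab ((hT.isConnected.dist_eq_zero_iff).mp hh)
    rw [← SimpleGraph.dist_eq_one_iff_adj]
    omega
  -- three distinct vertices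
  have h1 : 0 < Fintype.card V := by omega
  obtain ⟨u⟩ := Fintype.card_pos_iff.mp h1
  have hcard1 : 1 < Fintype.card V := by omega
  obtain ⟨w, hw⟩ := Fintype.exists_ne_of_one_lt_card hcard1 u
  obtain ⟨z, hzu, hzw⟩ : ∃ z, z ≠ u ∧ z ≠ w := by
    have hns : ¬ (Finset.univ : Finset V) ⊆ {u, w} := by
      intro hsub
      have h5 := Finset.card_le_card hsub
      have h6 : ({u, w} : Finset V).card ≤ 2 :=
        (Finset.card_insert_le _ _).trans (by simp)
      rw [Finset.card_univ] at h5
      omega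
    obtain ⟨z, _, hz⟩ := Finset.not_subset.mp hns
    simp only [Finset.mem_insert, Finset.mem_singleton, not_or] at hz
    exact ⟨z, hz.1, hz.2⟩
  have huw : u ≠ w := fun he => hw he.symm
  have p1 : (Walk.cons (hadj u w huw) Walk.nil).IsPath := by
    simp [Walk.isPath_def, huw]
  have p2 : (Walk.cons (hadj u z hzu.symm) (Walk.cons (hadj z w hzw) Walk.nil)).IsPath := by
    simp [Walk.isPath_def, huw, hzu, hzw, Ne.symm hzu]
  have := congrArg Walk.length (congrArg Subtype.val
    (hT.IsAcyclic.path_unique ⟨_, p1⟩ ⟨_, p2⟩))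
  simp at this

lemma gnorm_pos (hT : G.IsTree) {u v : V} (hu : peripheral G u) (hv : ¬ peripheral G v) :
    1 ≤ gnorm G v := by
  obtain ⟨w, hw, hd⟩ := exists_gnorm (v := v) hu
  rcases Nat.eq_zero_or_pos (gnorm G v) with h | h
  · rw [h] at hd
    have := (hT.isConnected.dist_eq_zero_iff).mp hd
    rw [this] at hv
    exact absurd hw hv
  · exact h

lemma hatS_lamsum (hT : G.IsTree) (h : IsHatS G) : LamSum G = 12 := by
  classical
  obtain ⟨x, a, c, b, y, hpw, hxa, hac, hcb, hby, hpend⟩ := h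
  simp only [List.pairwise_cons, List.mem_cons, List.mem_singleton, List.not_mem_nil,
    forall_eq_or_imp, forall_eq, IsEmpty.forall_iff, and_true, List.Pairwise.nil] at hpw
  obtain ⟨⟨nxa, nxc, nxb, nxy, -⟩, ⟨nac, nab, nay, -⟩, ⟨ncb, ncy, -⟩, ⟨nby, -⟩, -⟩ := hpw
  have hSιff : ∀ p : V, p ∉ ({x, a, c, b, y} : Set V) ↔
      (p ≠ x ∧ p ≠ a ∧ p ≠ c ∧ p ≠ b ∧ p ≠ y) := by
    intro p
    simp [Set.mem_insert_iff, not_or]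
  -- pendant adjacency
  have hpc : ∀ p : V, p ∉ ({x, a, c, b, y} : Set V) → G.Adj c p := by
    intro p hp
    exact ((hpend p hp c).mpr rfl).symm
  -- distances among the five
  have dxa : G.dist x a = 1 := SimpleGraph.dist_eq_one_iff_adj.mpr hxa
  have dac : G.dist a c = 1 := SimpleGraph.dist_eq_one_iff_adj.mpr hac
  have dcb : G.dist c b = 1 := SimpleGraph.dist_eq_one_iff_adj.mpr hcb
  have dby : G.dist b y = 1 := SimpleGraph.dist_eq_one_iff_adj.mpr hby
  have dxc : G.dist x c = 2 := by
    have := tpl hT (p := Walk.cons hxa (Walk.cons hac Walk.nil))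
      (by simp [Walk.isPath_def, nxa, nxc, nac])
    simpa using this.symm
  have dxb : G.dist x b = 3 := by
    have := tpl hT (p := Walk.cons hxa (Walk.cons hac (Walk.cons hcb Walk.nil)))
      (by simp [Walk.isPath_def, nxa, nxc, nxb, nac, nab, ncb])
    simpa using this.symm
  have dxy : G.dist x y = 4 := by
    have := tpl hT (p := Walk.cons hxa (Walk.cons hac (Walk.cons hcb (Walk.cons hby Walk.nil))))
      (by simp [Walk.isPath_def, nxa, nxc, nxb, nxy, nac, nab, nay, ncb, ncy, nby])
    simpa using this.symm
  have dab : G.dist a b = 2 := by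
    have := tpl hT (p := Walk.cons hac (Walk.cons hcb Walk.nil))
      (by simp [Walk.isPath_def, nac, nab, ncb])
    simpa using this.symm
  have day : G.dist a y = 3 := by
    have := tpl hT (p := Walk.cons hac (Walk.cons hcb (Walk.cons hby Walk.nil)))
      (by simp [Walk.isPath_def, nac, nab, nay, ncb, ncy, nby])
    simpa using this.symm
  have dcy : G.dist c y = 2 := by
    have := tpl hT (p := Walk.cons hcb (Walk.cons hby Walk.nil))
      (by simp [Walk.isPath_def, ncb, ncy, nby])
    simpa using this.symm
  -- distances to pendants
  have dcp : ∀ p, p ∉ ({x, a, c, b, y} : Set V) → G.dist c p = 1 := fun p hp =>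
    SimpleGraph.dist_eq_one_iff_adj.mpr (hpc p hp)
  have dap : ∀ p, p ∉ ({x, a, c, b, y} : Set V) → G.dist a p = 2 := by
    intro p hp
    obtain ⟨-, hpa, hpcne, -, -⟩ := (hSιff p).mp hp
    have := tpl hT (p := Walk.cons hac (Walk.cons (hpc p hp) Walk.nil))
      (by simp [Walk.isPath_def, nac, Ne.symm hpa, Ne.symm hpcne])
    simpa using this.symm
  have dbp : ∀ p, p ∉ ({x, a, c, b, y} : Set V) → G.dist b p = 2 := by
    intro p hp
    obtain ⟨-, -, hpcne, hpb, -⟩ := (hSιff p).mp hp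
    have := tpl hT (p := Walk.cons hcb.symm (Walk.cons (hpc p hp) Walk.nil))
      (by simp [Walk.isPath_def, Ne.symm ncb, Ne.symm hpb, Ne.symm hpcne])
    simpa using this.symm
  have dxp : ∀ p, p ∉ ({x, a, c, b, y} : Set V) → G.dist x p = 3 := by
    intro p hp
    obtain ⟨hpx, hpa, hpcne, -, -⟩ := (hSιff p).mp hp
    have := tpl hT (p := Walk.cons hxa (Walk.cons hac (Walk.cons (hpc p hp) Walk.nil)))
      (by simp [Walk.isPath_def, nxa, nxc, nac, Ne.symm hpx, Ne.symm hpa, Ne.symm hpcne])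
    simpa using this.symm
  have dyp : ∀ p, p ∉ ({x, a, c, b, y} : Set V) → G.dist y p = 3 := by
    intro p hp
    obtain ⟨-, -, hpcne, hpb, hpy⟩ := (hSιff p).mp hp
    have := tpl hT (p := Walk.cons hby.symm (Walk.cons hcb.symm (Walk.cons (hpc p hp) Walk.nil)))
      (by simp [Walk.isPath_def, Ne.symm nby, Ne.symm ncy, Ne.symm ncb,
        Ne.symm hpy, Ne.symm hpb, Ne.symm hpcne])
    simpa using this.symm
  have dpp : ∀ p q, p ∉ ({x, a, c, b, y} : Set V) → q ∉ ({x, a, c, b, y} : Set V) →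
      p ≠ q → G.dist p q = 2 := by
    intro p q hp hq hpq
    obtain ⟨-, -, hpcne, -, -⟩ := (hSιff p).mp hp
    obtain ⟨-, -, hqcne, -, -⟩ := (hSιff q).mp hq
    have := tpl hT (p := Walk.cons (hpc p hp).symm (Walk.cons (hpc q hq) Walk.nil))
      (by simp [Walk.isPath_def, hpq, hpcne, Ne.symm hqcne])
    simpa using this.symm
  -- symmetric distances
  have dax : G.dist a x = 1 := by rw [SimpleGraph.dist_comm]; exact dxa
  have dca : G.dist c a = 1 := by rw [SimpleGraph.dist_comm]; exact dac
  have dbc : G.dist b c = 1 := by rw [SimpleGraph.dist_comm]; exact dcb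
  have dyb : G.dist y b = 1 := by rw [SimpleGraph.dist_comm]; exact dby
  have dcx : G.dist c x = 2 := by rw [SimpleGraph.dist_comm]; exact dxc
  have dbx : G.dist b x = 3 := by rw [SimpleGraph.dist_comm]; exact dxb
  have dyx : G.dist y x = 4 := by rw [SimpleGraph.dist_comm]; exact dxy
  have dba : G.dist b a = 2 := by rw [SimpleGraph.dist_comm]; exact dab
  have dya : G.dist y a = 3 := by rw [SimpleGraph.dist_comm]; exact day
  have dyc : G.dist y c = 2 := by rw [SimpleGraph.dist_comm]; exact dcy
  have dpx : ∀ p, p ∉ ({x, a, c, b, y} : Set V) → G.dist p x = 3 := by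
    intro p hp; rw [SimpleGraph.dist_comm]; exact dxp p hp
  have dpa : ∀ p, p ∉ ({x, a, c, b, y} : Set V) → G.dist p a = 2 := by
    intro p hp; rw [SimpleGraph.dist_comm]; exact dap p hp
  have dpcc : ∀ p, p ∉ ({x, a, c, b, y} : Set V) → G.dist p c = 1 := by
    intro p hp; rw [SimpleGraph.dist_comm]; exact dcp p hp
  have dpb : ∀ p, p ∉ ({x, a, c, b, y} : Set V) → G.dist p b = 2 := by
    intro p hp; rw [SimpleGraph.dist_comm]; exact dbp p hp
  have dpy : ∀ p, p ∉ ({x, a, c, b, y} : Set V) → G.dist p y = 3 := by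
    intro p hp; rw [SimpleGraph.dist_comm]; exact dyp p hp
  -- eccentricities
  have eccx : ecc G x = 4 := by
    refine le_antisymm (ecc_le ?_) (by rw [← dxy]; exact dist_le_ecc x y)
    intro u
    by_cases h1 : u ∈ ({x, a, c, b, y} : Set V)
    · rcases h1 with rfl | rfl | rfl | rfl | rfl
      · rw [SimpleGraph.dist_self]; omega
      · omega
      · omega
      · omega
      · omega
    · rw [dxp u h1]; omega
  have eccy : ecc G y = 4 := by
    refine le_antisymm (ecc_le ?_) (by rw [← dyx]; exact dist_le_ecc y x)
    intro u
    by_cases h1 : u ∈ ({x, a, c, b, y} : Set V)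
    · rcases h1 with rfl | rfl | rfl | rfl | rfl
      · omega
      · omega
      · omega
      · omega
      · rw [SimpleGraph.dist_self]; omega
    · rw [dyp u h1]; omega
  have ecca : ecc G a = 3 := by
    refine le_antisymm (ecc_le ?_) (by rw [← day]; exact dist_le_ecc a y)
    intro u
    by_cases h1 : u ∈ ({x, a, c, b, y} : Set V)
    · rcases h1 with rfl | rfl | rfl | rfl | rfl
      · omega
      · rw [SimpleGraph.dist_self]; omega
      · omega
      · omega
      · omega
    · rw [dap u h1]; omega
  have eccb : ecc G b = 3 := by
    refine le_antisymm (ecc_le ?_) (by rw [← dbx]; exact dist_le_ecc b x)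
    intro u
    by_cases h1 : u ∈ ({x, a, c, b, y} : Set V)
    · rcases h1 with rfl | rfl | rfl | rfl | rfl
      · omega
      · omega
      · omega
      · rw [SimpleGraph.dist_self]; omega
      · omega
    · rw [dbp u h1]; omega
  have eccc : ecc G c = 2 := by
    refine le_antisymm (ecc_le ?_) (by rw [← dcx]; exact dist_le_ecc c x)
    intro u
    by_cases h1 : u ∈ ({x, a, c, b, y} : Set V)
    · rcases h1 with rfl | rfl | rfl | rfl | rfl
      · omega
      · omega
      · rw [SimpleGraph.dist_self]; omega
      · omega
      · omega
    · rw [dcp u h1]; omega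
  have eccp : ∀ p, p ∉ ({x, a, c, b, y} : Set V) → ecc G p = 3 := by
    intro p hp
    refine le_antisymm (ecc_le ?_) (by rw [← dpx p hp]; exact dist_le_ecc p x)
    intro u
    by_cases h1 : u ∈ ({x, a, c, b, y} : Set V)
    · rcases h1 with rfl | rfl | rfl | rfl | rfl
      · rw [dpx p hp]
      · rw [dpa p hp]; omega
      · rw [dpcc p hp]; omega
      · rw [dpb p hp]; omega
      · rw [dpy p hp]
    · by_cases h2 : u = p
      · subst h2; rw [SimpleGraph.dist_self]; omega
      · rw [dpp p u hp h1 (Ne.symm h2)]; omega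
  -- diameter
  have hdiam : gdiam G = 4 := by
    refine le_antisymm (Finset.sup_le ?_) (by rw [← eccx]; exact ecc_le_gdiam x)
    intro v _
    by_cases h1 : v ∈ ({x, a, c, b, y} : Set V)
    · rcases h1 with rfl | rfl | rfl | rfl | rfl <;> omega
    · rw [eccp v h1]; omega
  -- peripheral characterization
  have hper : ∀ v, peripheral G v ↔ (v = x ∨ v = y) := by
    intro v
    constructor
    · intro hv
      unfold peripheral at hv
      rw [hdiam] at hv
      by_cases h1 : v ∈ ({x, a, c, b, y} : Set V)
      · rcases h1 with rfl | rfl | rfl | rfl | rfl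
        · left; rfl
        · omega
        · omega
        · omega
        · right; rfl
      · rw [eccp v h1] at hv; omega
    · rintro (rfl | rfl)
      · unfold peripheral; rw [hdiam, eccx]
      · unfold peripheral; rw [hdiam, eccy]
  have hperx : peripheral G x := (hper x).mpr (Or.inl rfl)
  have hpery : peripheral G y := (hper y).mpr (Or.inr rfl)
  -- norms
  have gnx : gnorm G x = 0 := peripheral_gnorm_eq_zero hperx
  have gny : gnorm G y = 0 := peripheral_gnorm_eq_zero hpery
  have gnlb : ∀ v : V, ∀ k : ℕ, k ≤ G.dist v x → k ≤ G.dist v y → k ≤ gnorm G v := by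
    intro v k h1 h2
    refine le_csInf ⟨_, x, hperx, rfl⟩ ?_
    rintro m ⟨u, hu, rfl⟩
    rcases (hper u).mp hu with rfl | rfl
    · exact h1
    · exact h2
  have gna : gnorm G a = 1 := by
    refine le_antisymm (by have := gnorm_le (v := a) hperx; omega) (gnlb a 1 (by omega) (by omega))
  have gnb : gnorm G b = 1 := by
    refine le_antisymm (by have := gnorm_le (v := b) hpery; rw [dby] at this; omega)
      (gnlb b 1 (by omega) (by omega))
  have gnc : gnorm G c = 2 := by
    refine le_antisymm (by have := gnorm_le (v := c) hperx; omega)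
      (gnlb c 2 (by omega) (by omega))
  have gnp : ∀ p, p ∉ ({x, a, c, b, y} : Set V) → gnorm G p = 3 := by
    intro p hp
    have h1 := dpx p hp
    have h2 := dpy p hp
    refine le_antisymm (by have := gnorm_le (v := p) hperx; omega)
      (gnlb p 3 (by omega) (by omega))
  -- lambda values
  have lamx : lam G x = 4 := by rw [lam_eq, eccx, gnx]
  have lamy : lam G y = 4 := by rw [lam_eq, eccy, gny]
  have lama : lam G a = 2 := by rw [lam_eq, ecca, gna]
  have lamb : lam G b = 2 := by rw [lam_eq, eccb, gnb]
  have lamc : lam G c = 0 := by rw [lam_eq, eccc, gnc]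
  have lamp : ∀ p, p ∉ ({x, a, c, b, y} : Set V) → lam G p = 0 := by
    intro p hp
    rw [lam_eq, eccp p hp, gnp p hp]
  -- sum
  have hsub : ({x, a, c, b, y} : Finset V) ⊆ Finset.univ := Finset.subset_univ _
  have hzero : ∀ v ∈ Finset.univ, v ∉ ({x, a, c, b, y} : Finset V) → lam G v = 0 := by
    intro v _ hv
    refine lamp v ?_
    simp only [Finset.mem_insert, Finset.mem_singleton, not_or] at hv
    rw [hSιff]
    exact hv
  have : LamSum G = ∑ v ∈ ({x, a, c, b, y} : Finset V), lam G v :=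
    (Finset.sum_subset hsub hzero).symm
  rw [this, Finset.sum_insert (by simp [nxa, nxc, nxb, nxy]),
    Finset.sum_insert (by simp [nac, nab, nay]),
    Finset.sum_insert (by simp [ncb, ncy]),
    Finset.sum_insert (by simp [nby]), Finset.sum_singleton,
    lamx, lama, lamc, lamb, lamy]
  norm_num

lemma exists_peripheral_pair [Nonempty V] :
    ∃ x y : V, peripheral G x ∧ peripheral G y ∧ G.dist x y = gdiam G := by
  obtain ⟨x, hx⟩ := exists_gdiam (G := G)
  obtain ⟨y, hy⟩ := exists_ecc (G := G) x
  have hdxy : G.dist x y = gdiam G := by rw [hy, hx]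
  refine ⟨x, y, hx, ?_, hdxy⟩
  refine le_antisymm (ecc_le_gdiam y) ?_
  have := dist_le_ecc (G := G) y x
  rw [SimpleGraph.dist_comm (u := y) (v := x), hdxy] at this
  exact this

lemma structure12 (hT : G.IsTree) (hn : 8 ≤ Fintype.card V) (h12 : LamSum G = 12)
    (hd4 : gdiam G = 4) : IsHatS G := by
  classical
  have hne : Nonempty V := by rw [← Fintype.card_pos_iff]; omega
  obtain ⟨x, y, hpx, hpy, hdxy⟩ := exists_peripheral_pair (G := G)
  rw [hd4] at hdxy
  obtain ⟨P, hP, hPl⟩ := hT.isConnected.exists_path_of_dist x y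
  rw [hdxy] at hPl
  cases P with
  | nil => simp at hPl
  | cons hxa P1 =>
  rename_i a
  cases P1 with
  | nil => simp at hPl
  | cons hac P2 =>
  rename_i c
  cases P2 with
  | nil => simp at hPl
  | cons hcb P3 =>
  rename_i b
  cases P3 with
  | nil => simp at hPl
  | cons hby P4 =>
  rename_i y'
  cases P4 with
  | cons h P5 => simp [Walk.length_cons] at hPl
  | nil =>
  -- now the path is x-a-c-b-y
  have hsupp : (Walk.cons hxa (Walk.cons hac (Walk.cons hcb (Walk.cons hby Walk.nil)))).support
      = [x, a, c, b, y] := by simp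
  have hnd := hP.support_nodup
  rw [hsupp] at hnd
  simp only [List.nodup_cons, List.mem_cons, List.mem_singleton, List.not_mem_nil, not_or,
    List.nodup_nil, and_true] at hnd
  obtain ⟨⟨nxa, nxc, nxb, nxy, -⟩, ⟨nac, nab, nay, -⟩, ⟨ncb, ncy, -⟩, nby⟩ := hnd
  -- distances
  have dxa : G.dist x a = 1 := SimpleGraph.dist_eq_one_iff_adj.mpr hxa
  have dby : G.dist b y = 1 := SimpleGraph.dist_eq_one_iff_adj.mpr hby
  have dxc : G.dist x c = 2 := by
    have := tpl hT (p := Walk.cons hxa (Walk.cons hac Walk.nil))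
      (by simp [Walk.isPath_def, nxa, nxc, nac])
    simpa using this.symm
  have dxb : G.dist x b = 3 := by
    have := tpl hT (p := Walk.cons hxa (Walk.cons hac (Walk.cons hcb Walk.nil)))
      (by simp [Walk.isPath_def, nxa, nxc, nxb, nac, nab, ncb])
    simpa using this.symm
  have day : G.dist a y = 3 := by
    have := tpl hT (p := Walk.cons hac (Walk.cons hcb (Walk.cons hby Walk.nil)))
      (by simp [Walk.isPath_def, nac, nab, nay, ncb, ncy, nby])
    simpa using this.symm
  -- lambda values on the four outer path vertices
  have lamxv : lam G x = 4 := by rw [lam_peripheral hpx, hd4]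
  have lamyv : lam G y = 4 := by rw [lam_peripheral hpy, hd4]
  have lamav : 2 ≤ lam G a := by
    have h1 : 3 ≤ ecc G a := day ▸ dist_le_ecc a y
    have h2 : gnorm G a ≤ 1 := by
      have := gnorm_le (v := a) hpx
      rw [SimpleGraph.dist_comm (u := a) (v := x), dxa] at this
      exact this
    rw [lam_eq]; omega
  have lambv : 2 ≤ lam G b := by
    have h1 : 3 ≤ ecc G b := by
      have := dist_le_ecc (G := G) b x
      rw [SimpleGraph.dist_comm (u := b) (v := x), dxb] at this
      omega
    have h2 : gnorm G b ≤ 1 := by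
      have := gnorm_le (v := b) hpy
      rw [dby] at this
      exact this
    rw [lam_eq]; omega
  -- equality forces lam = 0 off S
  set S : Finset V := {x, a, b, y} with hS
  have hsum : ∑ v ∈ Finset.univ \ S, lam G v + ∑ v ∈ S, lam G v = LamSum G :=
    Finset.sum_sdiff (Finset.subset_univ S)
  have hSsum : 12 ≤ ∑ v ∈ S, lam G v := by
    rw [hS, Finset.sum_insert (by simp [nxa, nxb, nxy]),
      Finset.sum_insert (by simp [nab, nay]),
      Finset.sum_insert (by simp [nby]), Finset.sum_singleton]
    omega
  have hrest : ∀ v, v ∉ S → lam G v = 0 := by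
    intro v hv
    have h0 : ∑ w ∈ Finset.univ \ S, lam G w = 0 := by omega
    exact (Finset.sum_eq_zero_iff.mp h0) v (by simp [hv])
  -- midpoint uniqueness
  have hmid : ∀ u, G.dist x u = 2 → G.dist u y = 2 → u = c := by
    intro u h1 h2
    have hm : u ∈ (Walk.cons hxa (Walk.cons hac (Walk.cons hcb
        (Walk.cons hby Walk.nil)))).support :=
      mem_of_dist_add hT hP (by rw [h1, h2, hdxy])
    rw [hsupp] at hm
    have dxx : G.dist x x = 0 := SimpleGraph.dist_self
    have dxy4 := hdxy
    simp only [List.mem_cons, List.mem_singleton, List.not_mem_nil, or_false] at hm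
    rcases hm with rfl | rfl | rfl | rfl | rfl
    · omega
    · omega
    · rfl
    · omega
    · omega
  -- the pendant condition
  have hpend : ∀ v : V, v ∉ ({x, a, c, b, y} : Set V) → ∀ u : V, G.Adj v u ↔ u = c := by
    intro v hv
    have hv5 : v ≠ x ∧ v ≠ a ∧ v ≠ c ∧ v ≠ b ∧ v ≠ y := by
      simpa [Set.mem_insert_iff, not_or] using hv
    obtain ⟨hvx, hva, hvc, hvb, hvy⟩ := hv5
    have hvS : v ∉ S := by simp [hS, hvx, hva, hvb, hvy]
    have hlam0 : lam G v = 0 := hrest v hvS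
    have hvsupp : v ∉ (Walk.cons hxa (Walk.cons hac (Walk.cons hcb
        (Walk.cons hby Walk.nil)))).support := by
      rw [hsupp]
      simp [hvx, hva, hvc, hvb, hvy]
    -- distance sum
    have htri := hT.isConnected.dist_triangle (u := x) (v := v) (w := y)
    have hnotmem : G.dist x v + G.dist v y ≠ 4 := by
      intro h
      exact hvsupp (mem_of_dist_add hT hP (by rw [hdxy]; exact h))
    have hpar := dist_parity hT v x y
    rw [SimpleGraph.dist_comm (u := v) (v := x), hdxy] at hpar
    have hsum6 : 6 ≤ G.dist x v + G.dist v y := by omega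
    -- eccentricity of v is 3
    have heccle : ecc G v ≤ 4 := by
      have := ecc_le_gdiam (G := G) v
      omega
    have heccne4 : ecc G v ≠ 4 := by
      intro h4
      have hvper : peripheral G v := by
        unfold peripheral; omega
      have := peripheral_gnorm_eq_zero hvper
      rw [lam_eq] at hlam0
      omega
    have hdvx : G.dist v x ≤ 3 := by
      have := dist_le_ecc (G := G) v x
      omega
    have hdvy : G.dist v y ≤ 3 := by
      have := dist_le_ecc (G := G) v y
      omega
    rw [SimpleGraph.dist_comm (u := v) (v := x)] at hdvx
    obtain ⟨hdx3a, hdx3b⟩ : G.dist x v = 3 ∧ G.dist v y = 3 := by omega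
    have hdvx3 : G.dist v x = 3 := by
      rw [SimpleGraph.dist_comm (u := v) (v := x)]; exact hdx3a
    have hdyv3 : G.dist y v = 3 := by
      rw [SimpleGraph.dist_comm (u := y) (v := v)]; exact hdx3b
    have hecc3 : ecc G v = 3 := by
      have := dist_le_ecc (G := G) v y
      omega
    have hgn3 : gnorm G v = 3 := by
      have h1 : gnorm G v ≤ ecc G v := gnorm_le_ecc hpx v
      rw [lam_eq] at hlam0
      omega
    -- every neighbour of v is c
    have hnbr : ∀ u, G.Adj v u → u = c := by
      intro u hu
      have hd1 : G.dist v u = 1 := SimpleGraph.dist_eq_one_iff_adj.mpr hu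
      have hx' := adj_dist hT x hu
      have hy' := adj_dist hT y hu
      have hnotper : ¬ peripheral G u := by
        intro hup
        have := gnorm_le (v := v) hup
        omega
      have heccule : ecc G u ≤ 4 := by
        have := ecc_le_gdiam (G := G) u
        omega
      have hux : G.dist x u = 2 := by
        rcases hx' with h | h
        · exfalso
          apply hnotper
          have h4 : 4 ≤ ecc G u := by
            have := dist_le_ecc (G := G) u x
            rw [SimpleGraph.dist_comm (u := u) (v := x)] at this
            omega
          unfold peripheral
          omega
        · omega
      have huy : G.dist u y = 2 := by
        rcases hy' with h | h
        · exfalso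
          apply hnotper
          have h4 : 4 ≤ ecc G u := by
            have := dist_le_ecc (G := G) u y
            rw [SimpleGraph.dist_comm (u := y) (v := u)] at h
            omega
          unfold peripheral
          omega
        · rw [SimpleGraph.dist_comm (u := u) (v := y)]
          omega

      exact hmid u hux huy
    -- v has a neighbour, namely c
    have hvc' : G.Adj v c := by
      obtain ⟨u, hu, -⟩ := step hT (x := v) (y := x) (by omega)
      rw [← hnbr u hu]
      exact hu
    intro u
    constructor
    · exact hnbr u
    · rintro rfl
      exact hvc'
  -- assemble
  refine ⟨x, a, c, b, y, ?_, hxa, hac, hcb, hby, hpend⟩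
  simp only [List.pairwise_cons, List.mem_cons, List.mem_singleton, List.not_mem_nil,
    forall_eq_or_imp, forall_eq, IsEmpty.forall_iff, and_true, List.Pairwise.nil]
  exact ⟨⟨nxa, nxc, nxb, nxy, fun _ => trivial⟩, ⟨nac, nab, nay, fun _ => trivial⟩,
    ⟨ncb, ncy, fun _ => trivial⟩, ⟨by tauto, fun _ => trivial⟩, fun _ => trivial⟩


end Aux

theorem stmt_13 [Fintype V] (G : SimpleGraph V) (hT : G.IsTree)
    (hn : 8 ≤ Fintype.card V) :
    12 ≤ LamSum G ∧ (LamSum G = 12 ↔ IsHatS G) := by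
  classical
  have hne : Nonempty V := by rw [← Fintype.card_pos_iff]; omega
  have h2 : 2 ≤ gdiam G := diam_ge_two hT (by omega)
  by_cases h3 : gdiam G ≤ 3
  · have h14 := L23 hT hn h2 h3
    refine ⟨by omega, ?_, ?_⟩
    · intro h12; omega
    · intro hh
      have := hatS_lamsum hT hh
      omega
  · push_neg at h3
    obtain ⟨x, y, hpx, hpy, hd⟩ := exists_peripheral_pair (G := G)
    have hbound := L1 hT hpx hpy hd (by omega)
    refine ⟨by omega, ?_, fun hh => hatS_lamsum hT hh⟩
    intro h12
    have hd4 : gdiam G = 4 := by omega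
    exact structure12 hT hn h12 hd4
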